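/- arXiv:2601.12897 — 5 statements merged into one kernel-verified Lean document; each statement's English description precedes it below -/
import Mathlib

section
/- Let f(x,y) = u(x,y) · ∏_{j=1}^{m}(x − ζⱼ(y)) with u a unit, and let γ, γ′ be Puiseux arcs, none equal to any ζⱼ. Set cⱼ := ord(γ − ζⱼ) and suppose δ := ord(γ − γ′) satisfies δ > max_j cⱼ. Then ord_y f(γ′(y), y) = ord_y f(γ(y), y) =: h, and the coefficients of y^h in f(γ(y), y) and f(γ′(y), y) are equal. -/
open HahnSeries in
private lemma prod_ne_zero_order_lc {m : ℕ} (f : Fin m → HahnSeries ℚ ℂ)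
    (hf : ∀ j, f j ≠ 0) :
    (∏ j, f j) ≠ 0 ∧ (∏ j, f j).order = ∑ j, (f j).order ∧
      (∏ j, f j).leadingCoeff = ∏ j, (f j).leadingCoeff := by
  classical
  induction m with
  | zero => simp [HahnSeries.leadingCoeff_one]
  | succ n ih =>
    obtain ⟨h1, h2, h3⟩ := ih (fun j => f j.succ) (fun j => hf j.succ)
    rw [Fin.prod_univ_succ, Fin.sum_univ_succ, Fin.prod_univ_succ]
    have h0 := hf 0
    refine ⟨mul_ne_zero h0 h1, ?_, ?_⟩
    · rw [HahnSeries.order_mul h0 h1, h2]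
    · rw [HahnSeries.leadingCoeff_eq, HahnSeries.order_mul h0 h1,
        HahnSeries.coeff_mul_order_add_order, h3]

/-- Lemma `lem:h-and-a-stable`: if `δ := ord(γ - γ')` exceeds all the
contact orders `c j = ord(γ - ζ j)`, then `f(γ'(y),y)` and `f(γ(y),y)` have the same
order `h` and the same coefficient of `y^h`.  Here `f(γ(y),y)` is modeled as
`u · ∏ j (γ - ζ j)` and `f(γ'(y),y)` as `u' · ∏ j (γ' - ζ j)`, where `u, u'` are the
values of the unit along the two arcs (both of order `0` and with the same constant
term `u(0,0)`). -/
theorem order_and_leading_coeff_stable_beyond_max_contact (m : ℕ)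
    (u u' : HahnSeries ℚ ℂ) (hu : u ≠ 0) (hu' : u' ≠ 0)
    (hu0 : u.order = 0) (hu'0 : u'.order = 0) (huu' : u.coeff 0 = u'.coeff 0)
    (ζ : Fin m → HahnSeries ℚ ℂ) (hζ : ∀ j, 1 ≤ (ζ j).order)
    (γ γ' : HahnSeries ℚ ℂ) (hγ : ∀ j, γ ≠ ζ j) (hγ' : ∀ j, γ' ≠ ζ j)
    (hne : γ ≠ γ')
    (hδ : ∀ j, (γ - ζ j).order < (γ - γ').order) :
    (u' * ∏ j, (γ' - ζ j)).order = (u * ∏ j, (γ - ζ j)).order ∧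
    (u' * ∏ j, (γ' - ζ j)).coeff ((u * ∏ j, (γ - ζ j)).order) =
      (u * ∏ j, (γ - ζ j)).coeff ((u * ∏ j, (γ - ζ j)).order) := by
  classical
  have hgj : ∀ j, γ - ζ j ≠ 0 := fun j => sub_ne_zero.mpr (hγ j)
  have hgj' : ∀ j, γ' - ζ j ≠ 0 := fun j => sub_ne_zero.mpr (hγ' j)
  have hne' : γ - γ' ≠ 0 := sub_ne_zero.mpr hne
  -- key: each factor has the same order and leading coefficient
  have key : ∀ j, (γ' - ζ j).order = (γ - ζ j).order ∧
      (γ' - ζ j).leadingCoeff = (γ - ζ j).leadingCoeff := by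
    intro j
    have heq : γ' - ζ j = (γ - ζ j) + (γ' - γ) := by ring
    have hne'' : γ' - γ ≠ 0 := fun h => hne' (by
      have : γ - γ' = -(γ' - γ) := by ring
      rw [this, h, neg_zero])
    have horder : (γ' - γ).order = (γ - γ').order := by
      have : γ' - γ = -(γ - γ') := by ring
      rw [this, HahnSeries.order_neg]
    have htop : (γ - ζ j).orderTop < (γ' - γ).orderTop := by
      rw [HahnSeries.orderTop_of_ne_zero (hgj j), HahnSeries.orderTop_of_ne_zero hne'',
        WithTop.coe_lt_coe, ← HahnSeries.order_of_ne (hgj j),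
        ← HahnSeries.order_of_ne hne'', horder]
      exact hδ j
    constructor
    · have := HahnSeries.orderTop_add_eq_left htop
      rw [← heq] at this
      rw [HahnSeries.orderTop_of_ne_zero (hgj' j), HahnSeries.orderTop_of_ne_zero (hgj j),
        ← HahnSeries.order_of_ne (hgj' j), ← HahnSeries.order_of_ne (hgj j)] at this
      exact_mod_cast this
    · have := HahnSeries.leadingCoeff_add_eq_left htop
      rwa [← heq] at this
  obtain ⟨P1, P2, P3⟩ := prod_ne_zero_order_lc _ hgj
  obtain ⟨Q1, Q2, Q3⟩ := prod_ne_zero_order_lc _ hgj'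
  have hord : (u' * ∏ j, (γ' - ζ j)).order = (u * ∏ j, (γ - ζ j)).order := by
    rw [HahnSeries.order_mul hu' Q1, HahnSeries.order_mul hu P1, hu0, hu'0, Q2, P2]
    congr 1
    exact Finset.sum_congr rfl fun j _ => (key j).1
  refine ⟨hord, ?_⟩
  have hlcu : u'.leadingCoeff = u.leadingCoeff := by
    rw [HahnSeries.leadingCoeff_eq, HahnSeries.leadingCoeff_eq, hu0, hu'0, huu']
  calc (u' * ∏ j, (γ' - ζ j)).coeff ((u * ∏ j, (γ - ζ j)).order)
      = (u' * ∏ j, (γ' - ζ j)).leadingCoeff := by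
        rw [HahnSeries.leadingCoeff_eq, hord]
    _ = (u * ∏ j, (γ - ζ j)).leadingCoeff := by
        rw [HahnSeries.leadingCoeff_eq, HahnSeries.leadingCoeff_eq,
          HahnSeries.order_mul hu' Q1, HahnSeries.order_mul hu P1,
          HahnSeries.coeff_mul_order_add_order, HahnSeries.coeff_mul_order_add_order,
          hlcu, Q3, P3]
        congr 1
        exact Finset.prod_congr rfl fun j _ => (key j).2
    _ = (u * ∏ j, (γ - ζ j)).coeff ((u * ∏ j, (γ - ζ j)).order) :=
        HahnSeries.leadingCoeff_eq
end

section
/- The Newton polygon of a product of two series F·G (in ℂ[[Y^{1/N}]][X] type series with nonnegative rational Y-exponents) is the Minkowski sum of the Newton polygons of F and G. In particular, if u is a unit (u has a nonzero constant term, so its Newton polygon contains (0,0)), then the Newton polygon of u·F equals the Newton polygon of F. -/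
open scoped Pointwise

/-- The region whose boundary is the Newton polygon of a series
`F = Σ c_{ij} X^i Y^j`: the convex hull of `⋃_{c_{ij} ≠ 0} ((i,j) + ℝ²_{≥0})`. -/
noncomputable def newtonPolygon (F : HahnSeries (ℕ ×ₗ ℚ) ℂ) : Set (ℝ × ℝ) :=
  convexHull ℝ
    {x : ℝ × ℝ | ∃ p : ℕ ×ₗ ℚ, F.coeff p ≠ 0 ∧
      (((ofLex p).1 : ℝ) ≤ x.1 ∧ ((ofLex p).2 : ℝ) ≤ x.2)}

/-- A series has nonnegative `Y`-exponents. -/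
def nonnegSupport (F : HahnSeries (ℕ ×ₗ ℚ) ℂ) : Prop :=
  ∀ p : ℕ ×ₗ ℚ, F.coeff p ≠ 0 → 0 ≤ (ofLex p).2

namespace NP
open Set


def SS (F : HahnSeries (ℕ ×ₗ ℚ) ℂ) : Set (ℝ × ℝ) :=
  {x : ℝ × ℝ | ∃ p : ℕ ×ₗ ℚ, F.coeff p ≠ 0 ∧
      (((ofLex p).1 : ℝ) ≤ x.1 ∧ ((ofLex p).2 : ℝ) ≤ x.2)}

lemma np_eq (F : HahnSeries (ℕ ×ₗ ℚ) ℂ) : newtonPolygon F = convexHull ℝ (SS F) := rfl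

def O : Set (ℝ × ℝ) := {x | 0 ≤ x.1 ∧ 0 ≤ x.2}

lemma convex_O : Convex ℝ O := by
  have : O = Set.Ici (0 : ℝ × ℝ) := by
    ext x; simp [O, Prod.le_def, Set.mem_Ici]
  rw [this]; exact convex_Ici _

lemma SS_add_O (F : HahnSeries (ℕ ×ₗ ℚ) ℂ) : SS F + O = SS F := by
  ext x; constructor
  · rintro ⟨y, hy, v, hv, rfl⟩
    obtain ⟨p, hp, h1, h2⟩ := hy
    have hv1 : 0 ≤ v.1 := hv.1
    have hv2 : 0 ≤ v.2 := hv.2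
    refine ⟨p, hp, ?_, ?_⟩
    · show ((ofLex p).1 : ℝ) ≤ y.1 + v.1; linarith
    · show ((ofLex p).2 : ℝ) ≤ y.2 + v.2; linarith
  · intro hx
    exact ⟨x, hx, 0, ⟨le_refl 0, le_refl 0⟩, by simp⟩

lemma NP_add_O (F : HahnSeries (ℕ ×ₗ ℚ) ℂ) : newtonPolygon F + O = newtonPolygon F := by
  rw [np_eq, ← convex_O.convexHull_eq, ← convexHull_add, SS_add_O]

lemma NP_upward {F : HahnSeries (ℕ ×ₗ ℚ) ℂ} {x v : ℝ × ℝ} (hx : x ∈ newtonPolygon F)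
    (h1 : 0 ≤ v.1) (h2 : 0 ≤ v.2) : x + v ∈ newtonPolygon F := by
  rw [← NP_add_O F]; exact ⟨x, hx, v, ⟨h1, h2⟩, rfl⟩

/-- weight function -/
def w (α : ℝ) (p : ℕ ×ₗ ℚ) : ℝ := α * (ofLex p).1 + ((ofLex p).2 : ℝ)

lemma w_add (α : ℝ) (p q : ℕ ×ₗ ℚ) : w α (p + q) = w α p + w α q := by
  show α * ((ofLex p).1 + (ofLex q).1 : ℕ) + (((ofLex p).2 + (ofLex q).2 : ℚ) : ℝ) = _
  push_cast [w]; ring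

lemma w_inj {α : ℝ} (hirr : Irrational α) {p q : ℕ ×ₗ ℚ} (h : w α p = w α q) : p = q := by
  rw [w, w] at h
  by_cases hac : (ofLex p).1 = (ofLex q).1
  · have h2 : (ofLex p).2 = (ofLex q).2 := by
      have : ((ofLex p).2 : ℝ) = ((ofLex q).2 : ℝ) := by rw [hac] at h; linarith
      exact_mod_cast this
    have : ofLex p = ofLex q := Prod.ext hac h2
    simpa using congrArg toLex this
  · exfalso
    have hne : ((ofLex p).1 : ℝ) - ((ofLex q).1 : ℝ) ≠ 0 := by
      intro hzero
      exact hac (by exact_mod_cast sub_eq_zero.mp hzero)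
    set q0 : ℚ := ((ofLex q).2 - (ofLex p).2) / (((ofLex p).1 : ℚ) - ((ofLex q).1 : ℚ)) with hq0
    have : α = (q0 : ℝ) := by
      rw [hq0]; push_cast
      rw [eq_div_iff (by push_cast at hne ⊢; exact hne)]
      ring_nf
      ring_nf at h
      linarith
    exact hirr.ne_rat q0 this
lemma exists_w_min (H : HahnSeries (ℕ ×ₗ ℚ) ℂ) (hne : H ≠ 0) (hs : nonnegSupport H)
    {α : ℝ} (hα : 0 < α) :
    ∃ p ∈ H.support, ∀ r ∈ H.support, w α p ≤ w α r := by
  classical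
  obtain ⟨p0, hp0⟩ := HahnSeries.support_nonempty_iff.2 hne
  set B := w α p0 with hB
  have colwf : ∀ x : ℕ, ({p ∈ H.support | (ofLex p).1 = x}).IsWF := fun x =>
    H.isWF_support.mono (Set.sep_subset _ _)
  set colNe : ℕ → Prop := fun x => ({p ∈ H.support | (ofLex p).1 = x}).Nonempty with hcolNe
  set cmin : ℕ → ℕ ×ₗ ℚ := fun x => if h : colNe x then (colwf x).min h else p0 with hcmin
  have cmin_mem : ∀ x, colNe x → cmin x ∈ H.support ∧ (ofLex (cmin x)).1 = x := by
    intro x hx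
    have e : cmin x = (colwf x).min hx := dif_pos hx
    rw [e]; exact Set.IsWF.min_mem (colwf x) hx
  have cmin_min : ∀ x, ∀ r ∈ H.support, (ofLex r).1 = x → w α (cmin x) ≤ w α r := by
    intro x r hr hrx
    have hx : colNe x := ⟨r, hr, hrx⟩
    have e : cmin x = (colwf x).min hx := dif_pos hx
    have hle : cmin x ≤ r := by rw [e]; exact Set.IsWF.min_le _ hx ⟨hr, hrx⟩
    have h1 : (ofLex (cmin x)).1 = x := (cmin_mem x hx).2
    rcases (Prod.Lex.le_iff (x := cmin x) (y := r)).1 hle with h | ⟨_, h2⟩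
    · exfalso; rw [h1, hrx] at h; exact lt_irrefl _ h
    · rw [w, w, h1, hrx]
      have : ((ofLex (cmin x)).2 : ℝ) ≤ (ofLex r).2 := by exact_mod_cast h2
      linarith
  -- the finite set of candidate columns
  set N : ℕ := ⌈B / α⌉₊ + 1 with hN
  set T : Finset ℕ := (Finset.range N).filter colNe with hT
  have hp0w : α * ((ofLex p0).1 : ℝ) ≤ B := by
    have := hs p0 hp0
    have : (0:ℝ) ≤ ((ofLex p0).2 : ℝ) := by exact_mod_cast this
    rw [hB, w]; linarith
  have hx0N : (ofLex p0).1 < N := by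
    have h1 : ((ofLex p0).1 : ℝ) ≤ B / α := (le_div_iff₀ hα).2 (by linarith [hp0w])
    have h2 : ((ofLex p0).1 : ℝ) ≤ (⌈B / α⌉₊ : ℝ) := h1.trans (Nat.le_ceil _)
    have := Nat.cast_le (α := ℝ).1 h2
    omega
  have hx0T : (ofLex p0).1 ∈ T := by
    rw [hT, Finset.mem_filter]
    exact ⟨Finset.mem_range.2 hx0N, ⟨p0, hp0, rfl⟩⟩
  obtain ⟨xs, hxsT, hxsmin⟩ := Finset.exists_min_image T (fun x => w α (cmin x)) ⟨_, hx0T⟩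
  have hxsNe : colNe xs := (Finset.mem_filter.1 hxsT).2
  refine ⟨cmin xs, (cmin_mem xs hxsNe).1, ?_⟩
  intro r hr
  by_cases hrN : (ofLex r).1 < N
  · have hrT : (ofLex r).1 ∈ T := Finset.mem_filter.2 ⟨Finset.mem_range.2 hrN, ⟨r, hr, rfl⟩⟩
    exact (hxsmin _ hrT).trans (cmin_min _ r hr rfl)
  · have h1 : w α (cmin xs) ≤ B := (hxsmin _ hx0T).trans (cmin_min _ p0 hp0 rfl)
    have h2 : B < α * N := by
      rw [hN]
      have : B / α < (⌈B / α⌉₊ + 1 : ℝ) := (Nat.le_ceil _).trans_lt (by linarith)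
      have := (div_lt_iff₀ hα).1 this
      push_cast
      linarith
    have h3 : (N : ℝ) ≤ ((ofLex r).1 : ℝ) := by exact_mod_cast Nat.cast_le.2 (not_lt.1 hrN)
    have h4 : (0:ℝ) ≤ ((ofLex r).2 : ℝ) := by exact_mod_cast hs r hr
    have : α * (N:ℝ) ≤ α * ((ofLex r).1 : ℝ) := by
      exact mul_le_mul_of_nonneg_left h3 hα.le
    simp only [w] at h1 ⊢
    linarith
lemma prod_witness (F G : HahnSeries (ℕ ×ₗ ℚ) ℂ) (hF : F ≠ 0) (hG : G ≠ 0)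
    (hFs : nonnegSupport F) (hGs : nonnegSupport G)
    {α : ℝ} (hirr : Irrational α) (hα : 0 < α) :
    ∃ pF ∈ F.support, ∃ pG ∈ G.support,
      (∀ r ∈ F.support, w α pF ≤ w α r) ∧ (∀ r ∈ G.support, w α pG ≤ w α r) ∧
      (pF + pG) ∈ (F * G).support := by
  obtain ⟨pF, hpF, hminF⟩ := exists_w_min F hF hFs hα
  obtain ⟨pG, hpG, hminG⟩ := exists_w_min G hG hGs hα
  refine ⟨pF, hpF, pG, hpG, hminF, hminG, ?_⟩
  rw [HahnSeries.mem_support, HahnSeries.coeff_mul]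
  have huniq : ∀ ij ∈ Finset.antidiagonal F.isPWO_support G.isPWO_support (pF + pG),
      ij = (pF, pG) := by
    intro ij hij
    rw [Finset.mem_antidiagonal] at hij
    obtain ⟨h1, h2, h3⟩ := hij
    have e1 : w α ij.1 ≥ w α pF := hminF _ h1
    have e2 : w α ij.2 ≥ w α pG := hminG _ h2
    have e3 : w α ij.1 + w α ij.2 = w α pF + w α pG := by
      rw [← w_add, ← w_add, h3]
    have e4 : w α ij.1 = w α pF := by linarith
    have e5 : w α ij.2 = w α pG := by linarith
    have := w_inj hirr e4
    have := w_inj hirr e5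
    exact Prod.ext (by assumption) (by assumption)
  have hmem : (pF, pG) ∈ Finset.antidiagonal F.isPWO_support G.isPWO_support (pF + pG) :=
    Finset.mem_antidiagonal.2 ⟨hpF, hpG, rfl⟩
  have : Finset.antidiagonal F.isPWO_support G.isPWO_support (pF + pG) = {(pF, pG)} := by
    apply Finset.eq_singleton_iff_unique_mem.2 ⟨hmem, huniq⟩
  rw [this, Finset.sum_singleton]
  exact mul_ne_zero (HahnSeries.mem_support _ _ |>.1 hpF) (HahnSeries.mem_support _ _ |>.1 hpG)
set_option maxHeartbeats 1000000 in
lemma core (H : HahnSeries (ℕ ×ₗ ℚ) ℂ) (hs : nonnegSupport H)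
    (n : ℕ) (t : ℚ) (ht : 0 ≤ t)
    (W : ∀ α : ℝ, Irrational α → 0 < α → ∃ r ∈ H.support, w α r ≤ α * n + t) :
    ((n : ℝ), (t : ℝ)) ∈ newtonPolygon H := by
  classical
  by_cases hcase : ∃ r ∈ H.support, (ofLex r).1 ≤ n ∧ (ofLex r).2 ≤ t
  · obtain ⟨r, hr, h1, h2⟩ := hcase
    rw [np_eq]
    refine subset_convexHull ℝ _ ⟨r, hr, ?_, ?_⟩
    · show ((ofLex r).1 : ℝ) ≤ (n:ℝ); exact_mod_cast h1
    · show ((ofLex r).2 : ℝ) ≤ (t:ℝ); exact_mod_cast h2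
  push_neg at hcase
  -- case 2 : every support point with x ≤ n has y > t
  have hcase2 : ∀ r ∈ H.support, (ofLex r).1 ≤ n → t < (ofLex r).2 := hcase
  set tr : ℝ := (t : ℝ) with htr
  have htr0 : 0 ≤ tr := by rw [htr]; exact_mod_cast ht
  -- column machinery
  have colwf : ∀ x : ℕ, ({p ∈ H.support | (ofLex p).1 = x}).IsWF := fun x =>
    H.isWF_support.mono (Set.sep_subset _ _)
  set colNe : ℕ → Prop := fun x => ({p ∈ H.support | (ofLex p).1 = x}).Nonempty with hcolNe
  have hHne : H ≠ 0 := by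
    obtain ⟨α, hirr, h0, h1⟩ : ∃ α : ℝ, Irrational α ∧ tr < α ∧ α < tr + 1 := by
      obtain ⟨α, h, h1, h2⟩ := exists_irrational_btwn (lt_add_one tr)
      exact ⟨α, h, h1, h2⟩
    obtain ⟨r, hr, -⟩ := W α hirr (htr0.trans_lt h0)
    exact fun h0 => by simp [h0] at hr
  obtain ⟨pdum, hpdum⟩ := HahnSeries.support_nonempty_iff.2 hHne
  set cmin : ℕ → ℕ ×ₗ ℚ := fun x => if h : colNe x then (colwf x).min h else pdum with hcmin
  have cmin_mem : ∀ x, colNe x → cmin x ∈ H.support ∧ (ofLex (cmin x)).1 = x := by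
    intro x hx
    have e : cmin x = (colwf x).min hx := dif_pos hx
    rw [e]; exact Set.IsWF.min_mem (colwf x) hx
  set μr : ℕ → ℝ := fun x => ((ofLex (cmin x)).2 : ℝ) with hμr
  have cmin_min : ∀ x, ∀ r ∈ H.support, (ofLex r).1 = x → μr x ≤ ((ofLex r).2 : ℝ) := by
    intro x r hr hrx
    have hx : colNe x := ⟨r, hr, hrx⟩
    have e : cmin x = (colwf x).min hx := dif_pos hx
    have hle : cmin x ≤ r := by rw [e]; exact Set.IsWF.min_le _ hx ⟨hr, hrx⟩
    have h1 : (ofLex (cmin x)).1 = x := (cmin_mem x hx).2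
    rcases (Prod.Lex.le_iff (x := cmin x) (y := r)).1 hle with h | ⟨-, h2⟩
    · exfalso; rw [h1, hrx] at h; exact lt_irrefl _ h
    · show ((ofLex (cmin x)).2:ℝ) ≤ _; exact_mod_cast h2
  have hμ_nonneg : ∀ x, colNe x → 0 ≤ μr x := by
    intro x hx
    show (0:ℝ) ≤ ((ofLex (cmin x)).2:ℝ); exact_mod_cast hs _ ((cmin_mem x hx).1)
  have hμ_gt : ∀ x, colNe x → x ≤ n → tr < μr x := by
    intro x hx hxn
    have h1 := (cmin_mem x hx).2
    have := hcase2 _ (cmin_mem x hx).1 (by rw [h1]; exact hxn)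
    show (t:ℝ) < ((ofLex (cmin x)).2:ℝ); exact_mod_cast this
  -- from a witness: a column point
  have colw : ∀ α : ℝ, Irrational α → 0 < α → ∃ x : ℕ, colNe x ∧
      α * (x:ℝ) + μr x ≤ α * n + tr := by
    intro α hirr hα
    obtain ⟨r, hr, hwr⟩ := W α hirr hα
    refine ⟨(ofLex r).1, ⟨r, hr, rfl⟩, ?_⟩
    have := cmin_min (ofLex r).1 r hr rfl
    rw [w] at hwr
    linarith
  -- `Dn` : columns ≤ n
  set Dn : Finset ℕ := (Finset.range (n+1)).filter colNe with hDnd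
  have hDn_mem : ∀ x : ℕ, x ∈ Dn ↔ x ≤ n ∧ colNe x := by
    intro x; rw [hDnd, Finset.mem_filter, Finset.mem_range]
    constructor
    · rintro ⟨h1, h2⟩; exact ⟨by omega, h2⟩
    · rintro ⟨h1, h2⟩; exact ⟨by omega, h2⟩
  -- at large irrational α the witness column is ≤ n ; so Dn nonempty and n ≥ 1
  have bigα : ∀ α : ℝ, Irrational α → tr < α → ∃ x, x ∈ Dn ∧
      α * (x:ℝ) + μr x ≤ α * n + tr := by
    intro α hirr hα
    have hα0 : 0 < α := htr0.trans_lt hα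
    obtain ⟨x, hcol, hineq⟩ := colw α hirr hα0
    have hμ0 := hμ_nonneg x hcol
    have hxn : x ≤ n := by
      by_contra hgt
      have h1 : (n:ℝ) + 1 ≤ (x:ℝ) := by exact_mod_cast Nat.succ_le_of_lt (not_le.1 hgt)
      nlinarith
    exact ⟨x, (hDn_mem x).2 ⟨hxn, hcol⟩, hineq⟩
  have hn1 : 1 ≤ n ∧ Dn.Nonempty := by
    obtain ⟨α, hirr, h1, h2⟩ := exists_irrational_btwn (lt_add_one tr)
    obtain ⟨x, hxDn, hineq⟩ := bigα α hirr h1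
    have hcol := ((hDn_mem x).1 hxDn).2
    have hxn := ((hDn_mem x).1 hxDn).1
    have hμgt := hμ_gt x hcol hxn
    have hα0 : 0 < α := htr0.trans_lt h1
    constructor
    · by_contra hn0
      have : n = 0 := by omega
      subst this
      have : x = 0 := by omega
      subst this
      simp at hineq
      linarith
    · exact ⟨x, hxDn⟩
  obtain ⟨hn1, hDnne⟩ := hn1
  have hnR : (1:ℝ) ≤ (n:ℝ) := by exact_mod_cast hn1
  -- δ : the gap
  obtain ⟨xh, hxh, hmin⟩ := Finset.exists_min_image Dn μr hDnne
  set δr : ℝ := μr xh - tr with hδrd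
  have hδr : 0 < δr := by
    have := hμ_gt xh ((hDn_mem xh).1 hxh).2 ((hDn_mem xh).1 hxh).1
    rw [hδrd]; linarith
  have hδlow : ∀ x ∈ Dn, tr + δr ≤ μr x := by
    intro x hx; have := hmin x hx; rw [hδrd]; linarith
  set a0 : ℝ := δr / (2*n) with ha0d
  have ha0 : 0 < a0 := by rw [ha0d]; positivity
  set K : ℕ := n + ⌈tr/a0⌉₊ + 1 with hKd
  set T2 : Finset ℕ := (Finset.range (K+1)).filter (fun x => n < x ∧ colNe x) with hT2d
  have hT2_mem : ∀ x : ℕ, x ∈ T2 ↔ x ≤ K ∧ n < x ∧ colNe x := by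
    intro x; rw [hT2d, Finset.mem_filter, Finset.mem_range]
    constructor
    · rintro ⟨h1, h2⟩; exact ⟨by omega, h2⟩
    · rintro ⟨h1, h2⟩; exact ⟨by omega, h2⟩
  -- K1 : witnesses land in Dn or T2 for α ≥ a0
  have K1 : ∀ α : ℝ, Irrational α → a0 ≤ α → ∃ x, (x ∈ Dn ∨ x ∈ T2) ∧
      α * (x:ℝ) + μr x ≤ α * n + tr := by
    intro α hirr hαa0
    have hα0 : 0 < α := ha0.trans_le hαa0
    obtain ⟨x, hcol, hineq⟩ := colw α hirr hα0
    by_cases hxn : x ≤ n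
    · exact ⟨x, Or.inl ((hDn_mem x).2 ⟨hxn, hcol⟩), hineq⟩
    · have hgt : n < x := not_le.1 hxn
      have hμ0 := hμ_nonneg x hcol
      have h1 : α * ((x:ℝ) - n) ≤ tr := by nlinarith
      have h2 : (x:ℝ) - n ≤ tr / α := (le_div_iff₀ hα0).2 (by linarith)
      have h3 : tr / α ≤ tr / a0 := div_le_div_of_nonneg_left htr0 ha0 hαa0
      have h4 : (x:ℝ) ≤ (n:ℝ) + (⌈tr/a0⌉₊ : ℝ) := by
        have := Nat.le_ceil (tr/a0); linarith
      have h5 : x ≤ n + ⌈tr/a0⌉₊ := by exact_mod_cast h4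
      exact ⟨x, Or.inr ((hT2_mem x).2 ⟨by omega, hgt, hcol⟩), hineq⟩
  -- T2 is nonempty and a low α is in A'
  obtain ⟨αlow, hlirr, hl1, hl2⟩ := exists_irrational_btwn
    (show a0 < 2*a0 by linarith)
  have hαlow_wit : ∃ x ∈ T2, αlow * (x:ℝ) + μr x ≤ αlow * n + tr := by
    obtain ⟨x, hx, hineq⟩ := K1 αlow hlirr hl1.le
    rcases hx with hx | hx
    · exfalso
      have h1 := hδlow x hx
      have hcol := ((hDn_mem x).1 hx).2
      have hxn := ((hDn_mem x).1 hx).1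
      have hxR : (0:ℝ) ≤ (x:ℝ) := Nat.cast_nonneg x
      have h2 : 0 ≤ αlow * (x:ℝ) := mul_nonneg (ha0.trans hl1).le hxR
      have h3 : 2 * a0 * (n:ℝ) = δr := by
        rw [ha0d]; field_simp
      have hnpos : (0:ℝ) < n := by linarith
      nlinarith
    · exact ⟨x, hx, hineq⟩
  have hT2ne : T2.Nonempty := ⟨hαlow_wit.choose, hαlow_wit.choose_spec.1⟩
  -- the two piecewise linear minima
  set g1 : ℝ → ℝ := fun α => Dn.inf' hDnne (fun x => α * (x:ℝ) + μr x) with hg1d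
  set g2 : ℝ → ℝ := fun α => T2.inf' hT2ne (fun x => α * (x:ℝ) + μr x) with hg2d
  have hg1_le : ∀ (α : ℝ) (x : ℕ), x ∈ Dn → g1 α ≤ α * (x:ℝ) + μr x := by
    intro α x hx; exact Finset.inf'_le _ hx
  have hg2_le : ∀ (α : ℝ) (x : ℕ), x ∈ T2 → g2 α ≤ α * (x:ℝ) + μr x := by
    intro α x hx; exact Finset.inf'_le _ hx
  set C : ℝ := (K:ℝ) + 1 with hCd
  have hC0 : 0 < C := by positivity
  have hnK : (n:ℝ) ≤ C := by
    rw [hCd, hKd]; push_cast; linarith [Nat.cast_nonneg (α := ℝ) ⌈tr/a0⌉₊]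
  have lip : ∀ (s : Finset ℕ) (hsne : s.Nonempty), (∀ x ∈ s, (x:ℝ) ≤ C) →
      ∀ α β : ℝ, s.inf' hsne (fun x => α * (x:ℝ) + μr x) ≤
        s.inf' hsne (fun x => β * (x:ℝ) + μr x) + C * |α - β| := by
    intro s hsne hbd α β
    obtain ⟨x, hx, hgx⟩ := Finset.exists_mem_eq_inf' hsne (fun x => β * (x:ℝ) + μr x)
    have h1 : s.inf' hsne (fun x => α * (x:ℝ) + μr x) ≤ α * (x:ℝ) + μr x :=
      Finset.inf'_le _ hx
    have h2 : (α - β) * (x:ℝ) ≤ C * |α - β| := by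
      calc (α - β) * (x:ℝ) ≤ |α - β| * (x:ℝ) :=
            mul_le_mul_of_nonneg_right (le_abs_self _) (Nat.cast_nonneg x)
        _ ≤ |α - β| * C := mul_le_mul_of_nonneg_left (hbd x hx) (abs_nonneg _)
        _ = C * |α - β| := mul_comm _ _
    rw [hgx]
    nlinarith [h1]
  have hDnbd : ∀ x ∈ Dn, (x:ℝ) ≤ C := by
    intro x hx
    have := ((hDn_mem x).1 hx).1
    have : (x:ℝ) ≤ (n:ℝ) := by exact_mod_cast this
    linarith
  have hT2bd : ∀ x ∈ T2, (x:ℝ) ≤ C := by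
    intro x hx
    have := ((hT2_mem x).1 hx).1
    rw [hCd]
    have : (x:ℝ) ≤ (K:ℝ) := by exact_mod_cast this
    linarith
  have lip1 : ∀ α β : ℝ, g1 α ≤ g1 β + C * |α - β| := lip Dn hDnne hDnbd
  have lip2 : ∀ α β : ℝ, g2 α ≤ g2 β + C * |α - β| := lip T2 hT2ne hT2bd
  -- the sup
  set M : ℝ := tr + 2 * a0 + 1 with hMd
  set A : Set ℝ := {α : ℝ | a0 ≤ α ∧ α ≤ M ∧ g2 α ≤ α * n + tr} with hAd
  have hαlowA : αlow ∈ A := by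
    obtain ⟨x, hx, hineq⟩ := hαlow_wit
    exact ⟨hl1.le, by rw [hMd]; linarith, (hg2_le αlow x hx).trans hineq⟩
  have hAbdd : BddAbove A := ⟨M, fun β hβ => hβ.2.1⟩
  have hAne : A.Nonempty := ⟨αlow, hαlowA⟩
  set αs : ℝ := sSup A with hαsd
  have hαs_lb : a0 ≤ αs := le_trans hl1.le (le_csSup hAbdd hαlowA)
  have hαs_ub : αs ≤ M := csSup_le hAne (fun β hβ => hβ.2.1)
  have hαs_pos : 0 < αs := ha0.trans_le hαs_lb
  -- Claim I : g2 αs ≤ αs * n + tr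
  have claimI : g2 αs ≤ αs * n + tr := by
    by_contra hcon
    push_neg at hcon
    set ε : ℝ := g2 αs - (αs * n + tr) with hεd
    have hε : 0 < ε := by rw [hεd]; linarith
    set ε' : ℝ := ε / (C + n + 1) with hε'd
    have hden : (0:ℝ) < C + n + 1 := by positivity
    have hε' : 0 < ε' := by rw [hε'd]; positivity
    obtain ⟨β, hβA, hβgt⟩ := exists_lt_of_lt_csSup hAne (show αs - ε' < αs by linarith)
    have hβle : β ≤ αs := le_csSup hAbdd hβA
    have habs : |αs - β| ≤ ε' := by rw [abs_of_nonneg (by linarith)]; linarith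
    have h1 : g2 αs ≤ g2 β + C * |αs - β| := lip2 αs β
    have h2 : g2 β ≤ β * n + tr := hβA.2.2
    have h3 : β * n ≤ αs * n := mul_le_mul_of_nonneg_right hβle (Nat.cast_nonneg n)
    have h4 : C * |αs - β| ≤ C * ε' := mul_le_mul_of_nonneg_left habs hC0.le
    have h5 : (C + n) * ε' < ε := by
      rw [hε'd]
      rw [div_eq_inv_mul, ← mul_assoc]
      have : (C + (n:ℝ)) * (C + n + 1)⁻¹ < 1 := by
        rw [mul_inv_lt_iff₀ hden]
        nlinarith
      nlinarith
    have h6 : β * (n:ℝ) + tr + C * ε' < αs * n + tr + ε := by nlinarith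
    rw [hεd] at h6
    nlinarith
  -- Claim II : g1 αs ≤ αs * n + tr
  have keyII : ∀ ε' : ℝ, 0 < ε' → g1 αs ≤ αs * n + tr + (C + n + 1) * ε' := by
    intro ε' hε'
    have hβ : ∃ β : ℝ, |αs - β| ≤ ε' ∧ β ≤ M ∧ g1 β ≤ β * n + tr ∧ β ≤ αs + ε' := by
      by_cases hlt : αs < M
      · obtain ⟨β, hirr, hβ1, hβ2⟩ := exists_irrational_btwn
          (show αs < min (αs + ε') M by simp [lt_min_iff]; exact ⟨by linarith, hlt⟩)
        have hβM : β < M := hβ2.trans_le (min_le_right _ _)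
        have hβε : β < αs + ε' := hβ2.trans_le (min_le_left _ _)
        have hβa0 : a0 ≤ β := hαs_lb.trans hβ1.le
        have hβnA : β ∉ A := fun hmem => absurd (le_csSup hAbdd hmem) (not_le.2 hβ1)
        have hg2β : ¬ (g2 β ≤ β * n + tr) := fun hcon => hβnA ⟨hβa0, hβM.le, hcon⟩
        obtain ⟨x, hx, hineq⟩ := K1 β hirr hβa0
        rcases hx with hx | hx
        · exact ⟨β, by rw [abs_of_nonpos (by linarith)]; linarith, hβM.le,
            (hg1_le β x hx).trans hineq, hβε.le⟩
        · exact absurd ((hg2_le β x hx).trans hineq) hg2β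
      · -- αs = M
        have heqM : αs = M := le_antisymm hαs_ub (not_lt.1 hlt)
        obtain ⟨β, hirr, hβ1, hβ2⟩ := exists_irrational_btwn
          (show max (max tr a0) (M - ε') < M by
            simp [max_lt_iff]
            refine ⟨⟨by rw [hMd]; linarith, by rw [hMd]; linarith⟩, by linarith⟩)
        have hβtr : tr < β := lt_of_le_of_lt (le_trans (le_max_left _ _) (le_max_left _ _)) hβ1
        have hβa0 : a0 ≤ β := le_of_lt (lt_of_le_of_lt (le_trans (le_max_right _ _) (le_max_left _ _)) hβ1)
        have hβMε : M - ε' < β := lt_of_le_of_lt (le_max_right _ _) hβ1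
        obtain ⟨x, hx, hineq⟩ := K1 β hirr hβa0
        have hβ0 : 0 < β := htr0.trans_lt hβtr
        rcases hx with hx | hx
        · refine ⟨β, ?_, hβ2.le, (hg1_le β x hx).trans hineq, ?_⟩
          · rw [heqM, abs_of_nonneg (by linarith)]; linarith
          · rw [heqM] at *; linarith
        · -- x ∈ T2 impossible since β > tr
          exfalso
          have hgt := ((hT2_mem x).1 hx).2.1
          have hcol := ((hT2_mem x).1 hx).2.2
          have hμ0 := hμ_nonneg x hcol
          have h1 : (n:ℝ) + 1 ≤ (x:ℝ) := by exact_mod_cast Nat.succ_le_of_lt hgt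
          nlinarith
    obtain ⟨β, habs, hβM, hg1β, hβub⟩ := hβ
    have h1 : g1 αs ≤ g1 β + C * |αs - β| := lip1 αs β
    have h2 : C * |αs - β| ≤ C * ε' := mul_le_mul_of_nonneg_left habs hC0.le
    have h3 : β * n ≤ (αs + ε') * n := mul_le_mul_of_nonneg_right hβub (Nat.cast_nonneg n)
    have hn0 : (0:ℝ) ≤ n := Nat.cast_nonneg n
    nlinarith
  have claimII : g1 αs ≤ αs * n + tr := by
    by_contra hcon
    push_neg at hcon
    set ε : ℝ := g1 αs - (αs * n + tr) with hεd
    have hε : 0 < ε := by rw [hεd]; linarith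
    have hden : (0:ℝ) < C + n + 1 := by positivity
    have := keyII (ε / (C + n + 1) / 2) (by positivity)
    have h5 : (C + (n:ℝ) + 1) * (ε / (C + n + 1) / 2) = ε / 2 := by field_simp
    rw [h5] at this
    rw [hεd] at this
    linarith
  -- extract minimizers
  obtain ⟨x1, hx1, hgx1⟩ := Finset.exists_mem_eq_inf' hDnne (fun x => αs * (x:ℝ) + μr x)
  obtain ⟨x2, hx2, hgx2⟩ := Finset.exists_mem_eq_inf' hT2ne (fun x => αs * (x:ℝ) + μr x)
  have e1 : αs * (x1:ℝ) + μr x1 ≤ αs * n + tr := by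
    rw [hg1d] at claimII; rw [← hgx1]; exact claimII
  have e2 : αs * (x2:ℝ) + μr x2 ≤ αs * n + tr := by
    rw [hg2d] at claimI; rw [← hgx2]; exact claimI
  have hμ1 : tr + δr ≤ μr x1 := hδlow x1 hx1
  have hx1n : (x1:ℝ) < (n:ℝ) := by nlinarith
  have hx2n : (n:ℝ) < (x2:ℝ) := by exact_mod_cast ((hT2_mem x2).1 hx2).2.1
  have hden : (0:ℝ) < (x2:ℝ) - (x1:ℝ) := by linarith
  set lam : ℝ := ((x2:ℝ) - n) / ((x2:ℝ) - x1) with hlamd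
  have hlam0 : 0 ≤ lam := by
    rw [hlamd]; apply div_nonneg <;> linarith
  have hlam1 : lam ≤ 1 := by
    rw [hlamd, div_le_one hden]; linarith
  have hfirst : lam * (x1:ℝ) + (1 - lam) * (x2:ℝ) = (n:ℝ) := by
    rw [hlamd]; field_simp; ring
  -- the support points
  have hcol1 : colNe x1 := ((hDn_mem x1).1 hx1).2
  have hcol2 : colNe x2 := ((hT2_mem x2).1 hx2).2.2
  have hP1 : ((x1:ℝ), μr x1) ∈ SS H := by
    refine ⟨cmin x1, (cmin_mem x1 hcol1).1, ?_, le_refl _⟩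
    rw [(cmin_mem x1 hcol1).2]
  have hP2 : ((x2:ℝ), μr x2) ∈ SS H := by
    refine ⟨cmin x2, (cmin_mem x2 hcol2).1, ?_, le_refl _⟩
    rw [(cmin_mem x2 hcol2).2]
  set qbar : ℝ := lam * μr x1 + (1 - lam) * μr x2 with hqbard
  have hcomb : ((n:ℝ), qbar) ∈ convexHull ℝ (SS H) := by
    have := (convex_convexHull ℝ (SS H)) (subset_convexHull ℝ _ hP1)
      (subset_convexHull ℝ _ hP2) (a := lam) (b := 1 - lam) hlam0 (by linarith)
      (by ring)
    convert this using 1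
    apply Prod.ext
    · show (n:ℝ) = lam * (x1:ℝ) + (1-lam) * (x2:ℝ)
      rw [hfirst]
    · show qbar = lam * μr x1 + (1-lam) * μr x2
      rw [hqbard]
  have hqbar : qbar ≤ tr := by
    have c1 : lam * (αs * (x1:ℝ) + μr x1) ≤ lam * (αs * n + tr) :=
      mul_le_mul_of_nonneg_left e1 hlam0
    have c2 : (1-lam) * (αs * (x2:ℝ) + μr x2) ≤ (1-lam) * (αs * n + tr) :=
      mul_le_mul_of_nonneg_left e2 (by linarith)
    have c3 : αs * (lam * (x1:ℝ) + (1 - lam) * (x2:ℝ)) = αs * n := by rw [hfirst]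
    rw [hqbard]
    nlinarith [c1, c2, c3]
  have := NP_upward (F := H) (x := ((n:ℝ), qbar)) (v := ((0:ℝ), tr - qbar))
    (by rw [np_eq]; exact hcomb) (le_refl 0) (by simpa using hqbar)
  convert this using 1
  apply Prod.ext <;> simp

lemma nonneg_mul {F G : HahnSeries (ℕ ×ₗ ℚ) ℂ} (hFs : nonnegSupport F)
    (hGs : nonnegSupport G) : nonnegSupport (F * G) := by
  intro p hp
  obtain ⟨a, ha, b, hb, hab⟩ := Set.mem_add.1
    (HahnSeries.support_mul_subset ((F*G).mem_support p |>.2 hp))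
  have h1 : (ofLex p).2 = (ofLex a).2 + (ofLex b).2 := by rw [← hab]; rfl
  have := hFs a (F.mem_support a |>.1 ha)
  have := hGs b (G.mem_support b |>.1 hb)
  rw [h1]; linarith

lemma np_mul (F G : HahnSeries (ℕ ×ₗ ℚ) ℂ) (hF : F ≠ 0) (hG : G ≠ 0)
    (hFs : nonnegSupport F) (hGs : nonnegSupport G) :
    newtonPolygon (F * G) = newtonPolygon F + newtonPolygon G := by
  apply le_antisymm
  · -- ⊆
    have h1 : SS (F * G) ⊆ SS F + SS G := by
      rintro z ⟨p, hp, h1, h2⟩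
      obtain ⟨a, ha, b, hb, hab⟩ := Set.mem_add.1
        (HahnSeries.support_mul_subset ((F*G).mem_support p |>.2 hp))
      have e1 : (ofLex p).1 = (ofLex a).1 + (ofLex b).1 := by rw [← hab]; rfl
      have e2 : (ofLex p).2 = (ofLex a).2 + (ofLex b).2 := by rw [← hab]; rfl
      have e1R : ((ofLex p).1 : ℝ) = ((ofLex a).1 : ℝ) + ((ofLex b).1 : ℝ) := by
        rw [e1]; push_cast; ring
      have e2R : ((ofLex p).2 : ℝ) = ((ofLex a).2 : ℝ) + ((ofLex b).2 : ℝ) := by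
        rw [e2]; push_cast; ring
      have hb1 : (0:ℝ) ≤ ((ofLex b).1 : ℝ) := Nat.cast_nonneg _
      have hb2 : (0:ℝ) ≤ ((ofLex b).2 : ℝ) := by
        exact_mod_cast hGs b (G.mem_support b |>.1 hb)
      refine Set.mem_add.2 ⟨(((ofLex a).1 : ℝ) + (z.1 - ((ofLex p).1 : ℝ)),
        ((ofLex a).2 : ℝ) + (z.2 - ((ofLex p).2 : ℝ))), ⟨a, F.mem_support a |>.1 ha, ?_, ?_⟩,
        (((ofLex b).1 : ℝ), ((ofLex b).2 : ℝ)), ⟨b, G.mem_support b |>.1 hb, le_refl _, le_refl _⟩, ?_⟩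
      · show ((ofLex a).1 : ℝ) ≤ ((ofLex a).1 : ℝ) + (z.1 - ((ofLex p).1 : ℝ)); linarith
      · show ((ofLex a).2 : ℝ) ≤ ((ofLex a).2 : ℝ) + (z.2 - ((ofLex p).2 : ℝ)); linarith
      · apply Prod.ext
        · show ((ofLex a).1 : ℝ) + (z.1 - ((ofLex p).1:ℝ)) + ((ofLex b).1 : ℝ) = z.1
          rw [e1]; push_cast; ring
        · show ((ofLex a).2 : ℝ) + (z.2 - ((ofLex p).2:ℝ)) + ((ofLex b).2 : ℝ) = z.2
          rw [e2]; push_cast; ring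
    calc newtonPolygon (F * G) = convexHull ℝ (SS (F * G)) := np_eq _
      _ ⊆ convexHull ℝ (SS F + SS G) := convexHull_mono h1
      _ = convexHull ℝ (SS F) + convexHull ℝ (SS G) := convexHull_add _ _
      _ = newtonPolygon F + newtonPolygon G := by rw [np_eq, np_eq]
  · -- ⊇
    have key : SS F + SS G ⊆ newtonPolygon (F * G) := by
      rintro z ⟨x, ⟨p, hp, hp1, hp2⟩, y, ⟨q, hq, hq1, hq2⟩, rfl⟩
      set n : ℕ := (ofLex p).1 + (ofLex q).1 with hn
      set t : ℚ := (ofLex p).2 + (ofLex q).2 with ht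
      have ht0 : 0 ≤ t := by
        have := hFs p hp
        have := hGs q hq
        rw [ht]; linarith
      have hW : ∀ α : ℝ, Irrational α → 0 < α → ∃ r ∈ (F * G).support,
          w α r ≤ α * n + t := by
        intro α hirr hα
        obtain ⟨pF, hpF, pG, hpG, hminF, hminG, hmem⟩ :=
          prod_witness F G hF hG hFs hGs hirr hα
        refine ⟨pF + pG, hmem, ?_⟩
        have h1 : w α pF ≤ w α p := hminF p (F.mem_support p |>.2 hp)
        have h2 : w α pG ≤ w α q := hminG q (G.mem_support q |>.2 hq)
        have h3 : w α p + w α q = α * n + t := by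
          rw [w, w, hn, ht]; push_cast; ring
        rw [w_add]; linarith
      have hcore := core (F * G) (nonneg_mul hFs hGs) n t ht0 hW
      have hv1 : ((n:ℝ)) ≤ x.1 + y.1 := by
        rw [hn]; push_cast; linarith
      have hv2 : ((t:ℝ)) ≤ x.2 + y.2 := by
        rw [ht]; push_cast; linarith
      have := NP_upward (F := F * G) hcore
        (v := (x.1 + y.1 - (n:ℝ), x.2 + y.2 - (t:ℝ)))
        (by simp; linarith) (by simp; linarith)
      convert this using 1
      apply Prod.ext <;> simp
    calc newtonPolygon F + newtonPolygon G
        = convexHull ℝ (SS F + SS G) := by rw [np_eq, np_eq, convexHull_add]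
      _ ⊆ convexHull ℝ (newtonPolygon (F * G)) := convexHull_mono key
      _ = newtonPolygon (F * G) := (convex_convexHull ℝ _).convexHull_eq

end NP

/-- the Newton polygon of a product is the Minkowski sum of the Newton
polygons; in particular multiplying by a unit does not change the Newton polygon. -/
theorem newtonPolygon_mul (F G u : HahnSeries (ℕ ×ₗ ℚ) ℂ)
    (hF : F ≠ 0) (hG : G ≠ 0)
    (hFs : nonnegSupport F) (hGs : nonnegSupport G) (hus : nonnegSupport u)
    (hu : u.coeff (toLex (0, 0)) ≠ 0) :
    newtonPolygon (F * G) = newtonPolygon F + newtonPolygon G ∧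
    newtonPolygon (u * F) = newtonPolygon F := by
  constructor
  · exact NP.np_mul F G hF hG hFs hGs
  · have hu0 : u ≠ 0 := by
      intro h; rw [h] at hu; simp at hu
    have h1 : newtonPolygon (u * F) = newtonPolygon u + newtonPolygon F :=
      NP.np_mul u F hu0 hF hus hFs
    have h00 : ((0:ℝ), (0:ℝ)) ∈ newtonPolygon u := by
      rw [NP.np_eq]
      exact subset_convexHull ℝ _ ⟨toLex (0,0), hu, by simp, by simp⟩
    have hsub : newtonPolygon u ⊆ NP.O := by
      rw [NP.np_eq]
      apply convexHull_min _ NP.convex_O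
      rintro x ⟨p, hp, h1, h2⟩
      constructor
      · exact le_trans (Nat.cast_nonneg _) h1
      · refine le_trans ?_ h2
        exact_mod_cast hus p hp
    rw [h1]
    apply le_antisymm
    · calc newtonPolygon u + newtonPolygon F ⊆ NP.O + newtonPolygon F :=
            Set.add_subset_add_right hsub
        _ = newtonPolygon F + NP.O := by rw [add_comm]
        _ = newtonPolygon F := NP.NP_add_O F
    · intro x hx
      exact ⟨((0:ℝ), (0:ℝ)), h00, x, hx, by simp⟩
end

section
/- Let F(X,Y) = ṽ(X,Y) · ∏_{i=1}^{m−1} (X − Δᵢ(Y)) where ṽ is a unit and the Δᵢ are Puiseux series (possibly zero) with ord Δᵢ ≥ 1 when nonzero. Fix d > 0 and consider the weighted valuation ν with ν(X) = d, ν(Y) = 1. Then the X-degree of the ν-initial form of F equals the number of indices i such that Δᵢ ≡ 0 or ord Δᵢ ≥ d. -/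
open Polynomial Classical

namespace XDegAux

noncomputable section

/-- coeff of a finite sum of Hahn series -/
lemma coeff_sum {α : Type*} (s : Finset α) (f : α → HahnSeries ℚ ℂ) (q : ℚ) :
    (∑ a ∈ s, f a).coeff q = ∑ a ∈ s, (f a).coeff q := by
  classical
  induction s using Finset.induction with
  | empty => simp
  | insert _ _ h ih => simp [Finset.sum_insert h, HahnSeries.coeff_add, ih]

lemma mul_vanish_lt_lt {x y : HahnSeries ℚ ℂ} {A B : ℚ}
    (hx : ∀ q < A, x.coeff q = 0) (hy : ∀ q < B, y.coeff q = 0) :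
    ∀ q < A + B, (x * y).coeff q = 0 := by
  intro q hq
  rw [HahnSeries.coeff_mul]
  refine Finset.sum_eq_zero fun ij hij => ?_
  obtain ⟨-, -, hsum⟩ := (Finset.mem_addAntidiagonal).mp hij
  rcases lt_or_ge ij.1 A with h | h
  · rw [hx _ h, zero_mul]
  · have : ij.2 < B := by linarith [hsum ▸ hq]
    rw [hy _ this, mul_zero]

lemma mul_vanish_lt_le {x y : HahnSeries ℚ ℂ} {A B : ℚ}
    (hx : ∀ q < A, x.coeff q = 0) (hy : ∀ q ≤ B, y.coeff q = 0) :
    ∀ q ≤ A + B, (x * y).coeff q = 0 := by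
  intro q hq
  rw [HahnSeries.coeff_mul]
  refine Finset.sum_eq_zero fun ij hij => ?_
  obtain ⟨-, -, hsum⟩ := (Finset.mem_addAntidiagonal).mp hij
  rcases lt_or_ge ij.1 A with h | h
  · rw [hx _ h, zero_mul]
  · have : ij.2 ≤ B := by linarith [hsum ▸ hq]
    rw [hy _ this, mul_zero]

lemma mul_vanish_le_lt {x y : HahnSeries ℚ ℂ} {A B : ℚ}
    (hx : ∀ q ≤ A, x.coeff q = 0) (hy : ∀ q < B, y.coeff q = 0) :
    ∀ q ≤ A + B, (x * y).coeff q = 0 := by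
  intro q hq
  rw [mul_comm]
  exact mul_vanish_lt_le hy hx q (by linarith)

/-- The key predicate: `P` has ν-initial form of X-degree `k` and weighted value `c`. -/
def Good (d : ℚ) (P : Polynomial (HahnSeries ℚ ℂ)) (k : ℕ) (c : ℚ) : Prop :=
  P.coeff k ≠ 0 ∧ (k : ℚ) * d + (P.coeff k).order = c ∧
  (∀ i : ℕ, ∀ q : ℚ, q < c - i * d → (P.coeff i).coeff q = 0) ∧
  (∀ i : ℕ, k < i → ∀ q : ℚ, q ≤ c - i * d → (P.coeff i).coeff q = 0)

lemma Good.mul {d : ℚ} {P Q : Polynomial (HahnSeries ℚ ℂ)} {k l : ℕ} {c e : ℚ}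
    (hP : Good d P k c) (hQ : Good d Q l e) : Good d (P * Q) (k + l) (c + e) := by
  obtain ⟨hPk, hPc, hPlo, hPhi⟩ := hP
  obtain ⟨hQl, hQe, hQlo, hQhi⟩ := hQ
  have hordP : (P.coeff k).order = c - k * d := by linarith
  have hordQ : (Q.coeff l).order = e - l * d := by linarith
  set q0 : ℚ := (c + e) - (k + l : ℕ) * d with hq0
  have hq0' : q0 = (c - k * d) + (e - l * d) := by push_cast [hq0]; ring
  -- coefficient of the product at each index
  have hcoeff : ∀ m : ℕ, ((P * Q).coeff m) =
      ∑ ij ∈ Finset.HasAntidiagonal.antidiagonal m, P.coeff ij.1 * Q.coeff ij.2 := fun m =>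
    Polynomial.coeff_mul P Q m
  -- vanishing of general coefficients strictly below the line
  have hlo : ∀ i : ℕ, ∀ q : ℚ, q < (c + e) - i * d → ((P * Q).coeff i).coeff q = 0 := by
    intro i q hq
    rw [hcoeff, coeff_sum]
    refine Finset.sum_eq_zero fun ij hij => ?_
    have hsum : ij.1 + ij.2 = i := Finset.HasAntidiagonal.mem_antidiagonal.mp hij
    refine mul_vanish_lt_lt (hPlo ij.1) (hQlo ij.2) q ?_
    have hmul : (i : ℚ) * d = (ij.1 : ℚ) * d + (ij.2 : ℚ) * d := by
      have hcast : ((ij.1 : ℚ) + ij.2) = (i : ℚ) := by exact_mod_cast congrArg Nat.cast hsum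
      rw [← hcast]; ring
    linarith
  -- strict vanishing above k + l
  have hhi : ∀ i : ℕ, k + l < i → ∀ q : ℚ, q ≤ (c + e) - i * d →
      ((P * Q).coeff i).coeff q = 0 := by
    intro i hi q hq
    rw [hcoeff, coeff_sum]
    refine Finset.sum_eq_zero fun ij hij => ?_
    have hsum : ij.1 + ij.2 = i := Finset.HasAntidiagonal.mem_antidiagonal.mp hij
    have hcast : ((ij.1 : ℚ) + ij.2) = (i : ℚ) := by exact_mod_cast congrArg Nat.cast hsum
    have hline : (c - ij.1 * d) + (e - ij.2 * d) = (c + e) - i * d := by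
      rw [← hcast]; ring
    rcases le_or_gt ij.1 k with h1 | h1
    · have h2 : l < ij.2 := by omega
      exact mul_vanish_lt_le (hPlo ij.1) (hQhi ij.2 h2) q (by linarith)
    · exact mul_vanish_le_lt (hPhi ij.1 h1) (hQlo ij.2) q (by linarith)
  -- the coefficient at k+l is nonzero at q0
  have hkey : ((P * Q).coeff (k + l)).coeff q0 ≠ 0 := by
    rw [hcoeff, coeff_sum]
    have hmem : ((k, l) : ℕ × ℕ) ∈ Finset.HasAntidiagonal.antidiagonal (k + l) := by
      simp [Finset.HasAntidiagonal.mem_antidiagonal]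
    rw [Finset.sum_eq_single_of_mem _ hmem]
    · have := HahnSeries.coeff_mul_order_add_order (P.coeff k) (Q.coeff l)
      rw [hordP, hordQ, ← hq0'] at this
      rw [this]
      exact mul_ne_zero (HahnSeries.leadingCoeff_ne_zero.mpr hPk)
        (HahnSeries.leadingCoeff_ne_zero.mpr hQl)
    · intro ij hij hne
      have hsum : ij.1 + ij.2 = k + l := Finset.HasAntidiagonal.mem_antidiagonal.mp hij
      have hcast : ((ij.1 : ℚ) + ij.2) = ((k : ℚ) + l) := by exact_mod_cast congrArg Nat.cast hsum
      have hline : (c - ij.1 * d) + (e - ij.2 * d) = q0 := by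
        rw [hq0]; push_cast; rw [← hcast]; ring
      rcases lt_trichotomy ij.1 k with h1 | h1 | h1
      · have h2 : l < ij.2 := by omega
        exact mul_vanish_lt_le (hPlo ij.1) (hQhi ij.2 h2) q0 (by linarith)
      · exact absurd (Prod.ext h1 (by omega)) hne
      · exact mul_vanish_le_lt (hPhi ij.1 h1) (hQlo ij.2) q0 (by linarith)
  have hne : (P * Q).coeff (k + l) ≠ 0 := fun h => hkey (by simp [h])
  refine ⟨hne, ?_, hlo, hhi⟩
  -- order equals q0
  have hle : ((P * Q).coeff (k + l)).order ≤ q0 := HahnSeries.order_le_of_coeff_ne_zero hkey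
  have hge : q0 ≤ ((P * Q).coeff (k + l)).order := by
    by_contra h
    push_neg at h
    exact mt HahnSeries.coeff_order_eq_zero.mp hne (hlo (k + l) _ h)
  have : ((P * Q).coeff (k + l)).order = q0 := le_antisymm hle hge
  rw [this, hq0]; push_cast; ring

end

end XDegAux

namespace XDegAux

lemma good_one {d : ℚ} (hd : 0 < d) : Good d (1 : Polynomial (HahnSeries ℚ ℂ)) 0 0 := by
  refine ⟨by simp, by simp [HahnSeries.order_one], ?_, ?_⟩
  · intro i q hq
    rcases Nat.eq_zero_or_pos i with rfl | hi
    · rw [Polynomial.coeff_one, if_pos rfl]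
      rw [HahnSeries.coeff_one, if_neg]
      intro h; rw [h] at hq; simp at hq
    · rw [Polynomial.coeff_one, if_neg (by omega)]; simp
  · intro i hi q hq
    rw [Polynomial.coeff_one, if_neg (by omega)]; simp

lemma coeff_XsubC (Δ : HahnSeries ℚ ℂ) (i : ℕ) :
    (X - C Δ : Polynomial (HahnSeries ℚ ℂ)).coeff i =
      if i = 1 then 1 else if i = 0 then -Δ else 0 := by
  rcases i with _ | _ | i <;> simp [Polynomial.coeff_sub, Polynomial.coeff_X,
    Polynomial.coeff_C]

lemma good_factor_high {d : ℚ} (hd : 0 < d) {Δ : HahnSeries ℚ ℂ}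
    (h : Δ = 0 ∨ d ≤ Δ.order) : Good d (X - C Δ) 1 d := by
  refine ⟨by simp [coeff_XsubC], by simp [coeff_XsubC, HahnSeries.order_one], ?_, ?_⟩
  · intro i q hq
    rw [coeff_XsubC]
    rcases i with _ | _ | i
    · rw [if_neg (by norm_num), if_pos rfl]
      push_cast at hq
      rcases h with rfl | h
      · simp
      · rw [HahnSeries.coeff_neg, HahnSeries.coeff_eq_zero_of_lt_order (by linarith), neg_zero]
    · rw [if_pos rfl]
      push_cast at hq
      rw [HahnSeries.coeff_one, if_neg (by intro h0; rw [h0] at hq; linarith)]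
    · rw [if_neg (by omega), if_neg (by omega)]; simp
  · intro i hi q hq
    rw [coeff_XsubC, if_neg (by omega), if_neg (by omega)]; simp

lemma good_factor_low {d : ℚ} (hd : 0 < d) {Δ : HahnSeries ℚ ℂ}
    (h0 : Δ ≠ 0) (h : Δ.order < d) : Good d (X - C Δ) 0 Δ.order := by
  have hne : (-Δ : HahnSeries ℚ ℂ) ≠ 0 := neg_ne_zero.mpr h0
  refine ⟨by simpa [coeff_XsubC] using hne, ?_, ?_, ?_⟩
  · simp [coeff_XsubC, HahnSeries.order_neg]
  · intro i q hq
    rw [coeff_XsubC]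
    rcases i with _ | _ | i
    · rw [if_neg (by norm_num), if_pos rfl]
      push_cast at hq
      rw [HahnSeries.coeff_neg, HahnSeries.coeff_eq_zero_of_lt_order (by linarith), neg_zero]
    · rw [if_pos rfl]
      push_cast at hq
      rw [HahnSeries.coeff_one, if_neg (by intro hh; rw [hh] at hq; linarith)]
    · rw [if_neg (by omega), if_neg (by omega)]; simp
  · intro i hi q hq
    rw [coeff_XsubC]
    rcases i with _ | _ | i
    · omega
    · rw [if_pos rfl]
      push_cast at hq
      rw [HahnSeries.coeff_one, if_neg (by intro hh; rw [hh] at hq; linarith)]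
    · rw [if_neg (by omega), if_neg (by omega)]; simp

end XDegAux

namespace XDegAux

lemma good_prod {n : ℕ} {d : ℚ} (hd : 0 < d) (Δ : Fin n → HahnSeries ℚ ℂ)
    (s : Finset (Fin n)) :
    Good d (∏ i ∈ s, (X - C (Δ i)))
      ((s.filter (fun i => Δ i = 0 ∨ d ≤ (Δ i).order)).card)
      (∑ i ∈ s, if Δ i = 0 ∨ d ≤ (Δ i).order then d else (Δ i).order) := by
  classical
  induction s using Finset.induction with
  | empty => simpa using good_one hd
  | @insert a s ha ih =>
    rw [Finset.prod_insert ha, Finset.sum_insert ha, Finset.filter_insert]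
    by_cases hc : Δ a = 0 ∨ d ≤ (Δ a).order
    · rw [if_pos hc, Finset.card_insert_of_notMem (by simp [ha]), if_pos hc]
      have := (good_factor_high hd hc).mul ih
      simpa [Nat.add_comm] using this
    · rw [if_neg hc, if_neg hc]
      push_neg at hc
      have := (good_factor_low hd hc.1 hc.2).mul ih
      simpa using this
end XDegAux

namespace XDegAux

lemma good_unit {d : ℚ} (hd : 0 < d) (v : Polynomial (HahnSeries ℚ ℂ))
    (hv0 : (v.coeff 0).coeff 0 ≠ 0)
    (hvnn : ∀ i : ℕ, ∀ q : ℚ, q < 0 → (v.coeff i).coeff q = 0) :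
    Good d v 0 0 := by
  have h0 : v.coeff 0 ≠ 0 := fun h => hv0 (by simp [h])
  have hord : (v.coeff 0).order = 0 := by
    refine le_antisymm (HahnSeries.order_le_of_coeff_ne_zero hv0) ?_
    by_contra h
    push_neg at h
    exact mt HahnSeries.coeff_order_eq_zero.mp h0 (hvnn 0 _ h)
  refine ⟨h0, by simp [hord], ?_, ?_⟩
  · intro i q hq
    refine hvnn i q ?_
    have : (0:ℚ) ≤ (i:ℚ) * d := by positivity
    linarith
  · intro i hi q hq
    refine hvnn i q ?_
    have : (0:ℚ) < (i:ℚ) * d := by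
      have : (0:ℚ) < (i:ℚ) := by exact_mod_cast hi
      positivity
    linarith

lemma good_order_le {d : ℚ} {P : Polynomial (HahnSeries ℚ ℂ)} {k : ℕ} {c : ℚ}
    (h : Good d P k c) :
    P.coeff k ≠ 0 ∧
    (∀ i : ℕ, P.coeff i ≠ 0 →
      (k : ℚ) * d + (P.coeff k).order ≤ (i : ℚ) * d + (P.coeff i).order) ∧
    (∀ i : ℕ, k < i → P.coeff i ≠ 0 →
      (k : ℚ) * d + (P.coeff k).order < (i : ℚ) * d + (P.coeff i).order) := by
  obtain ⟨h1, h2, hlo, hhi⟩ := h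
  refine ⟨h1, ?_, ?_⟩
  · intro i hi
    have : c - (i:ℚ) * d ≤ (P.coeff i).order := by
      by_contra h
      push_neg at h
      exact mt HahnSeries.coeff_order_eq_zero.mp hi (hlo i _ h)
    linarith
  · intro i hik hi
    have : c - (i:ℚ) * d < (P.coeff i).order := by
      by_contra h
      push_neg at h
      exact mt HahnSeries.coeff_order_eq_zero.mp hi (hhi i hik _ h)
    linarith

end XDegAux

open XDegAux

/-- for `F = ṽ · ∏ (X - Δᵢ)` with `ṽ` a unit, and the weighting
`ν(X) = d`, `ν(Y) = 1`, the `X`-degree of the ν-initial form of `F` equals the number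
of indices `i` with `Δᵢ ≡ 0` or `ord Δᵢ ≥ d`.  The `X`-degree of the initial form is
expressed by saying that the index `k` realizes the minimal weighted value
`i·d + ord(F.coeff i)` and that every larger index has strictly larger weighted
value. -/
theorem xDegree_initialForm_eq_card (n : ℕ) (d : ℚ) (hd : 0 < d)
    (v : Polynomial (HahnSeries ℚ ℂ))
    (hv0 : (v.coeff 0).coeff 0 ≠ 0)
    (hvnn : ∀ i : ℕ, ∀ q : ℚ, q < 0 → (v.coeff i).coeff q = 0)
    (Δ : Fin n → HahnSeries ℚ ℂ)
    (hΔ : ∀ i, Δ i ≠ 0 → 1 ≤ (Δ i).order)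
    (F : Polynomial (HahnSeries ℚ ℂ))
    (hF : F = v * ∏ i, (X - C (Δ i)))
    (k : ℕ)
    (hk : k = (Finset.univ.filter (fun i : Fin n => Δ i = 0 ∨ d ≤ (Δ i).order)).card) :
    F.coeff k ≠ 0 ∧
    (∀ i : ℕ, F.coeff i ≠ 0 →
      (k : ℚ) * d + (F.coeff k).order ≤ (i : ℚ) * d + (F.coeff i).order) ∧
    (∀ i : ℕ, k < i → F.coeff i ≠ 0 →
      (k : ℚ) * d + (F.coeff k).order < (i : ℚ) * d + (F.coeff i).order) := by
  have hg : Good d F k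
      (∑ i : Fin n, if Δ i = 0 ∨ d ≤ (Δ i).order then d else (Δ i).order) := by
    rw [hF, hk]
    have := (good_unit hd v hv0 hvnn).mul (good_prod hd Δ Finset.univ)
    simpa using this
  exact good_order_le hg
end

section
/- Let P ∈ ℂ[Z] be a polynomial with P(0) = 0 that is not a monomial (i.e., P has at least two nonzero terms). Define Q(Z) := ∫₀^Z P(t) dt. Then Q′ = P, Q(0) = 0, and there exists p ∈ ℂ with P(p) = 0 but Q(p) ≠ 0; moreover p ≠ 0. -/
open Polynomial

/-- The formal antiderivative `Q(Z) = ∫₀^Z P(t) dt` of a polynomial `P`. -/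
noncomputable def antideriv (P : Polynomial ℂ) : Polynomial ℂ :=
  ∑ n ∈ P.support, C (P.coeff n / (n + 1)) * X ^ (n + 1)

/-- if `P(0) = 0` and `P` is not a monomial (at least two nonzero terms),
then its antiderivative `Q` satisfies `Q' = P`, `Q(0) = 0`, and there exists `p ≠ 0`
with `P(p) = 0` but `Q(p) ≠ 0`. -/
theorem exists_root_of_deriv_not_root (P : Polynomial ℂ)
    (hP0 : P.eval 0 = 0) (hP : 2 ≤ P.support.card) :
    derivative (antideriv P) = P ∧ (antideriv P).eval 0 = 0 ∧
    ∃ p : ℂ, p ≠ 0 ∧ P.eval p = 0 ∧ (antideriv P).eval p ≠ 0 := by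
  set Q := antideriv P with hQdef
  -- Part 1 : Q' = P
  have hderiv : derivative Q = P := by
    rw [hQdef, antideriv, derivative_sum]
    conv_rhs => rw [P.as_sum_support]
    refine Finset.sum_congr rfl fun n _ => ?_
    rw [derivative_C_mul, derivative_X_pow]
    have hne : ((n : ℂ) + 1) ≠ 0 := Nat.cast_add_one_ne_zero n
    rw [← C_mul_X_pow_eq_monomial]
    push_cast
    rw [← mul_assoc, ← C_mul, div_mul_cancel₀ _ hne]
  -- Part 2 : Q(0) = 0
  have hQ0 : Q.eval 0 = 0 := by
    rw [hQdef, antideriv, eval_finset_sum]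
    refine Finset.sum_eq_zero fun n _ => ?_
    simp [zero_pow (Nat.succ_ne_zero n)]
  refine ⟨hderiv, hQ0, ?_⟩
  by_contra hcon
  push_neg at hcon
  -- every root of P is a root of Q
  have H : ∀ p : ℂ, P.eval p = 0 → Q.eval p = 0 := by
    intro p hp
    by_cases hp0 : p = 0
    · rw [hp0]; exact hQ0
    · exact hcon p hp0 hp
  have hPne : P ≠ 0 := by
    intro h
    rw [h] at hP
    simp at hP
  have hQne : Q ≠ 0 := by
    intro h
    apply hPne
    rw [← hderiv, h, derivative_zero]
  set n := Q.natDegree with hn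
  have hn1 : 1 ≤ n := by
    by_contra hle
    push_neg at hle
    interval_cases n
    · apply hPne
      rw [← hderiv, eq_C_of_natDegree_eq_zero hn.symm, derivative_C]
  have hcardQ : Q.roots.card = n :=
    splits_iff_card_roots.mp (IsAlgClosed.splits Q)
  -- degree of P is n - 1
  have hPcoeff : P.coeff (n - 1) ≠ 0 := by
    rw [← hderiv, coeff_derivative]
    have h1 : n - 1 + 1 = n := Nat.succ_pred_eq_of_pos hn1
    rw [h1]
    refine mul_ne_zero ?_ ?_
    · exact mt leadingCoeff_eq_zero.mp hQne
    · exact Nat.cast_add_one_ne_zero _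
  have hPdeg : P.natDegree = n - 1 := by
    refine le_antisymm ?_ (le_natDegree_of_ne_zero hPcoeff)
    rw [← hderiv]
    exact natDegree_derivative_le Q
  have hcardP : P.roots.card = n - 1 := by
    rw [splits_iff_card_roots.mp (IsAlgClosed.splits P), hPdeg]
  -- the set of distinct roots of Q
  set S := Q.roots.toFinset with hS
  have h0S : (0 : ℂ) ∈ S := by
    rw [hS, Multiset.mem_toFinset, mem_roots hQne]
    exact hQ0
  have hsub : P.roots.toFinset ⊆ S := by
    intro r hr
    rw [Multiset.mem_toFinset, mem_roots hPne] at hr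
    rw [hS, Multiset.mem_toFinset, mem_roots hQne]
    exact H r hr
  -- counting
  have hcount : ∀ r ∈ S, Q.roots.count r = P.roots.count r + 1 := by
    intro r hr
    rw [hS, Multiset.mem_toFinset, mem_roots hQne] at hr
    rw [count_roots, count_roots, ← hderiv, derivative_rootMultiplicity_of_root hr]
    have : 1 ≤ Q.rootMultiplicity r := (rootMultiplicity_pos hQne).mpr hr
    omega
  have hsum1 : ∑ r ∈ S, Q.roots.count r = n := by
    rw [hS, Multiset.toFinset_sum_count_eq, hcardQ]
  have hsum2 : ∑ r ∈ P.roots.toFinset, P.roots.count r = n - 1 := by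
    rw [Multiset.toFinset_sum_count_eq, hcardP]
  have hle : n - 1 ≤ ∑ r ∈ S, P.roots.count r := by
    rw [← hsum2]
    exact Finset.sum_le_sum_of_subset hsub
  have hsum3 : ∑ r ∈ S, Q.roots.count r = (∑ r ∈ S, P.roots.count r) + S.card := by
    rw [Finset.sum_congr rfl hcount, Finset.sum_add_distrib]
    simp
  have hScard : S.card ≤ 1 := by omega
  have hSeq : S = {0} :=
    Finset.eq_singleton_iff_unique_mem.mpr
      ⟨h0S, fun x hx => by
        have := Finset.card_le_one.mp hScard x hx 0 h0S
        exact this⟩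
  -- so Q.roots is n copies of 0
  have hroots : Q.roots = Multiset.replicate n 0 := by
    rw [Multiset.eq_replicate]
    refine ⟨hcardQ, fun b hb => ?_⟩
    have : b ∈ S := Multiset.mem_toFinset.mpr hb
    rw [hSeq] at this
    simpa using this
  have hQeq : Q = C Q.leadingCoeff * X ^ n := by
    conv_lhs => rw [← C_leadingCoeff_mul_prod_multiset_X_sub_C hcardQ]
    rw [hroots]
    simp [Multiset.map_replicate, Multiset.prod_replicate]
  -- then P is a monomial, contradiction
  have hPeq : P = C (Q.leadingCoeff * n) * X ^ (n - 1) := by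
    rw [← hderiv]
    conv_lhs => rw [hQeq]
    rw [derivative_C_mul, derivative_X_pow, ← mul_assoc, ← C_mul]
  have : P.support.card ≤ 1 := by
    rw [hPeq]
    exact Finset.card_le_card (support_C_mul_X_pow' _ _) |>.trans (by simp)
  omega
end

section
/- Let F(X,Y) = Σ c_{mq} X^m Y^q (m ∈ ℤ_{≥0}, q ∈ ℚ_{≥0}) with F_X(0,Y) ≡ 0, let δ > 0 and set ω := min{ q + δ·m : (m,q) ∈ supp(F_X) }. Suppose in_ν(F_X)(X,Y) = Y^ω · P(X/Y^δ) for a polynomial P with P(0) = 0, and set G(X,Y) := F(X,Y) − F(0,Y), Q(Z) := ∫₀^Z P. Then in_ν(G)(X,Y) = Y^{ω+δ} · Q(X/Y^δ), where ν is the weighting ν(X) = δ, ν(Y) = 1. -/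
open Polynomial

/-- `v` is the ν-value of `F` for the weighting `ν(X) = δ`, `ν(Y) = 1`. -/
def IsNuVal (d v : ℚ) (F : Polynomial (HahnSeries ℚ ℂ)) : Prop :=
  (∃ i, F.coeff i ≠ 0 ∧ (i : ℚ) * d + (F.coeff i).order = v) ∧
  ∀ i, F.coeff i ≠ 0 → v ≤ (i : ℚ) * d + (F.coeff i).order

/-- The ν-initial form of `F` at value `v`. -/
noncomputable def nuInitial (d v : ℚ) (F : Polynomial (HahnSeries ℚ ℂ)) :
    Polynomial (HahnSeries ℚ ℂ) :=
  ∑ i ∈ F.support,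
    if (i : ℚ) * d + (F.coeff i).order = v then
      C (HahnSeries.single ((F.coeff i).order) ((F.coeff i).coeff ((F.coeff i).order)))
        * X ^ i
    else 0

open scoped Classical

lemma nuInitial_coeff (d v : ℚ) (F : Polynomial (HahnSeries ℚ ℂ)) (m : ℕ) :
    (nuInitial d v F).coeff m =
      if F.coeff m ≠ 0 ∧ (m : ℚ) * d + (F.coeff m).order = v then
        HahnSeries.single ((F.coeff m).order) ((F.coeff m).coeff ((F.coeff m).order))
      else 0 := by
  unfold nuInitial
  rw [finset_sum_coeff]
  rw [Finset.sum_eq_single m]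
  · by_cases hm : F.coeff m = 0
    · simp [hm, Polynomial.notMem_support_iff.2 hm]
    · by_cases h : (m : ℚ) * d + (F.coeff m).order = v <;>
        simp [hm, h, coeff_C_mul, coeff_X_pow]
  · intro i _ hi
    by_cases h : (i : ℚ) * d + (F.coeff i).order = v <;>
      simp [h, coeff_C_mul, coeff_X_pow, Ne.symm hi]
  · intro hm
    rw [Polynomial.notMem_support_iff] at hm
    simp [hm]

lemma coeff_rangeSum (N : ℕ) (f : ℕ → HahnSeries ℚ ℂ) (hf : ∀ k, N < k → f k = 0) (k : ℕ) :
    (∑ m ∈ Finset.range (N + 1), C (f m) * X ^ m).coeff k = f k := by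
  rw [finset_sum_coeff]
  simp only [coeff_C_mul, coeff_X_pow, mul_ite, mul_one, mul_zero]
  rw [Finset.sum_ite_eq (Finset.range (N+1)) k f]
  by_cases hk : k ∈ Finset.range (N+1)
  · simp [hk]
  · simp only [hk, if_false]
    exact (hf k (by simpa using hk)).symm

lemma antideriv_coeff_zero (P : Polynomial ℂ) : (antideriv P).coeff 0 = 0 := by
  unfold antideriv
  rw [finset_sum_coeff]
  simp [coeff_C_mul, coeff_X_pow]

lemma antideriv_coeff_succ (P : Polynomial ℂ) (j : ℕ) :
    (antideriv P).coeff (j + 1) = P.coeff j / (j + 1) := by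
  unfold antideriv
  rw [finset_sum_coeff]
  rw [Finset.sum_eq_single j]
  · by_cases hj : P.coeff j = 0
    · simp [Polynomial.notMem_support_iff.2 hj, hj]
    · simp [Polynomial.mem_support_iff.2 hj, coeff_C_mul, coeff_X_pow]
  · intro i _ hi
    simp [coeff_C_mul, coeff_X_pow, Nat.succ_injective.ne_iff.mpr (Ne.symm hi), Ne.symm hi]
  · intro hj
    rw [Polynomial.notMem_support_iff] at hj
    simp [hj]

lemma deriv_coeff_eq (F : Polynomial (HahnSeries ℚ ℂ)) (j : ℕ) :
    (derivative F).coeff j = F.coeff (j + 1) * HahnSeries.C ((j : ℂ) + 1) := by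
  rw [Polynomial.coeff_derivative]
  congr 1
  rw [map_add, map_natCast, map_one]

lemma deriv_facts (F : Polynomial (HahnSeries ℚ ℂ)) (j : ℕ) (h : F.coeff (j + 1) ≠ 0) :
    (derivative F).coeff j ≠ 0 ∧
    ((derivative F).coeff j).order = (F.coeff (j + 1)).order ∧
    ((derivative F).coeff j).coeff ((F.coeff (j + 1)).order) =
      (F.coeff (j + 1)).coeff ((F.coeff (j + 1)).order) * ((j : ℂ) + 1) := by
  have hc : ((j : ℂ) + 1) ≠ 0 := by
    exact_mod_cast Nat.cast_add_one_ne_zero (R := ℂ) j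
  have hC : (HahnSeries.C ((j : ℂ) + 1) : HahnSeries ℚ ℂ) ≠ 0 := HahnSeries.C_ne_zero hc
  have hd := deriv_coeff_eq F j
  have hne : (derivative F).coeff j ≠ 0 := by
    rw [hd]; exact mul_ne_zero h hC
  have hord : ((derivative F).coeff j).order = (F.coeff (j + 1)).order := by
    rw [hd, HahnSeries.order_mul h hC, HahnSeries.order_C, add_zero]
  refine ⟨hne, hord, ?_⟩
  have := HahnSeries.coeff_mul_order_add_order (F.coeff (j + 1)) (HahnSeries.C ((j : ℂ) + 1))
  rw [HahnSeries.order_C, add_zero, HahnSeries.leadingCoeff_eq, HahnSeries.leadingCoeff_eq,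
    HahnSeries.order_C] at this
  rw [hd, this]
  simp [HahnSeries.C_apply]

private theorem main_aux (δ ω : ℚ) (hδ : 0 < δ)
    (F : Polynomial (HahnSeries ℚ ℂ))
    (hFXne : derivative F ≠ 0)
    (hFX0 : (derivative F).coeff 0 = 0)
    (hω : (∃ i, (derivative F).coeff i ≠ 0 ∧ (i : ℚ) * δ + ((derivative F).coeff i).order = ω) ∧
      ∀ i, (derivative F).coeff i ≠ 0 → ω ≤ (i : ℚ) * δ + ((derivative F).coeff i).order)
    (P : Polynomial ℂ) (hPne : P ≠ 0) (hP0 : P.coeff 0 = 0)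
    (hinit : nuInitial δ ω (derivative F) =
      ∑ m ∈ Finset.range (P.natDegree + 1),
        C (HahnSeries.single (ω - δ * (m : ℚ)) (P.coeff m)) * X ^ m)
    (G : Polynomial (HahnSeries ℚ ℂ)) (hG : G = F - C (F.coeff 0))
    (Q : Polynomial ℂ) (hQ : Q = antideriv P) :
    ((∃ i, G.coeff i ≠ 0 ∧ (i : ℚ) * δ + (G.coeff i).order = ω + δ) ∧
      ∀ i, G.coeff i ≠ 0 → ω + δ ≤ (i : ℚ) * δ + (G.coeff i).order) ∧
    nuInitial δ (ω + δ) G =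
      ∑ m ∈ Finset.range (Q.natDegree + 1),
        C (HahnSeries.single (ω + δ - δ * (m : ℚ)) (Q.coeff m)) * X ^ m := by
  -- basic coefficient facts
  have hG0 : G.coeff 0 = 0 := by simp [hG]
  have hGs : ∀ j : ℕ, G.coeff (j + 1) = F.coeff (j + 1) := by
    intro j; simp [hG, Polynomial.coeff_C]
  have hFd : ∀ j : ℕ, F.coeff (j + 1) ≠ 0 ↔ (derivative F).coeff j ≠ 0 := by
    intro j
    constructor
    · intro h; exact (deriv_facts F j h).1
    · intro h hc
      exact h (by rw [deriv_coeff_eq, hc, zero_mul])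
  -- hinit, coefficientwise
  have hP : ∀ j : ℕ,
      (if (derivative F).coeff j ≠ 0 ∧ (j : ℚ) * δ + ((derivative F).coeff j).order = ω then
        HahnSeries.single (((derivative F).coeff j).order)
          (((derivative F).coeff j).coeff (((derivative F).coeff j).order))
      else 0) = HahnSeries.single (ω - δ * (j : ℚ)) (P.coeff j) := by
    intro j
    have h1 := nuInitial_coeff δ ω (derivative F) j
    have h2 := coeff_rangeSum P.natDegree
      (fun m => HahnSeries.single (ω - δ * (m : ℚ)) (P.coeff m))
      (fun k hk => by
        show HahnSeries.single (ω - δ * (k : ℚ)) (P.coeff k) = 0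
        rw [Polynomial.coeff_eq_zero_of_natDegree_lt hk, HahnSeries.single_eq_zero]) j
    rw [← hinit, h1] at h2
    simpa using h2
  -- first part: IsNuVal
  constructor
  · constructor
    · obtain ⟨i, hi, hiv⟩ := hω.1
      have hF : F.coeff (i + 1) ≠ 0 := (hFd i).2 hi
      obtain ⟨-, hord, -⟩ := deriv_facts F i hF
      refine ⟨i + 1, by rw [hGs]; exact hF, ?_⟩
      rw [hGs]
      rw [hord] at hiv
      push_cast
      linarith
    · intro i hi
      match i with
      | 0 => exact absurd hG0 hi
      | (j + 1) =>
        rw [hGs] at hi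
        obtain ⟨hdne, hord, -⟩ := deriv_facts F j hi
        have := hω.2 j hdne
        rw [hord] at this
        rw [hGs]
        push_cast
        linarith
  -- second part: the initial forms
  · refine Polynomial.ext fun k => ?_
    rw [nuInitial_coeff]
    rw [coeff_rangeSum Q.natDegree
      (fun m => HahnSeries.single (ω + δ - δ * (m : ℚ)) (Q.coeff m))
      (fun k hk => by
        show HahnSeries.single (ω + δ - δ * (k : ℚ)) (Q.coeff k) = 0
        rw [Polynomial.coeff_eq_zero_of_natDegree_lt hk, HahnSeries.single_eq_zero]) k]
    show _ = HahnSeries.single (ω + δ - δ * (k : ℚ)) (Q.coeff k)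
    match k with
    | 0 =>
      rw [hQ, antideriv_coeff_zero, HahnSeries.single_eq_zero, if_neg]
      intro hcond
      exact hcond.1 hG0
    | (j + 1) =>
      have hQc : Q.coeff (j + 1) = P.coeff j / ((j : ℂ) + 1) := by
        rw [hQ, antideriv_coeff_succ]
      have hc1 : ((j : ℂ) + 1) ≠ 0 := by
        exact_mod_cast Nat.cast_add_one_ne_zero (R := ℂ) j
      by_cases hx : F.coeff (j + 1) = 0
      · -- zero coefficient: both sides vanish
        have hdz : (derivative F).coeff j = 0 := by
          rw [deriv_coeff_eq, hx, zero_mul]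
        have hp := hP j
        rw [if_neg (fun hh => hh.1 hdz)] at hp
        have hPj : P.coeff j = 0 := by
          by_contra h0
          exact HahnSeries.single_ne_zero h0 hp.symm
        rw [hQc, hPj, zero_div, HahnSeries.single_eq_zero, if_neg]
        intro hcond
        exact hcond.1 (by rw [hGs]; exact hx)
      · obtain ⟨hdne, hord, hlead⟩ := deriv_facts F j hx
        by_cases hcond : (j : ℚ) * δ + ((derivative F).coeff j).order = ω
        · -- main case
          have hp := hP j
          rw [if_pos ⟨hdne, hcond⟩, hord, hlead] at hp
          have hx1 : (F.coeff (j + 1)).coeff (F.coeff (j + 1)).order ≠ 0 :=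
            by rw [← HahnSeries.leadingCoeff_eq]; exact HahnSeries.leadingCoeff_ne_zero.mpr hx
          have hxc : (F.coeff (j + 1)).coeff (F.coeff (j + 1)).order * ((j : ℂ) + 1) ≠ 0 :=
            mul_ne_zero hx1 hc1
          have hPj : P.coeff j ≠ 0 := by
            intro h0
            rw [h0, HahnSeries.single_eq_zero] at hp
            exact HahnSeries.single_ne_zero hxc hp
          have hords : (F.coeff (j + 1)).order = ω - δ * (j : ℚ) := by
            have h := congrArg (fun x : HahnSeries ℚ ℂ => x.order) hp
            rwa [HahnSeries.order_single hxc, HahnSeries.order_single hPj] at h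
          rw [hords] at hp
          have hvals : (F.coeff (j + 1)).coeff (ω - δ * (j : ℚ)) * ((j : ℂ) + 1)
              = P.coeff j := HahnSeries.single_injective _ hp
          have hcondG : G.coeff (j + 1) ≠ 0 ∧
              ((j + 1 : ℕ) : ℚ) * δ + (G.coeff (j + 1)).order = ω + δ := by
            constructor
            · rw [hGs]; exact hx
            · rw [hGs, hords]; push_cast; ring
          rw [if_pos hcondG, hGs, hords, hQc, ← hvals]
          rw [mul_div_cancel_right₀ _ hc1]
          congr 1
          push_cast
          ring
        · -- off the edge: both sides vanish
          have hp := hP j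
          rw [if_neg (fun hh => hcond hh.2)] at hp
          have hPj : P.coeff j = 0 := by
            by_contra h0
            exact HahnSeries.single_ne_zero h0 hp.symm
          rw [hQc, hPj, zero_div, HahnSeries.single_eq_zero, if_neg]
          intro hh
          apply hcond
          have h2 := hh.2
          rw [hGs, ← hord] at h2
          push_cast at h2
          linarith

/-- if `F_X(0,Y) ≡ 0`, `ω = min{q + δm : (m,q) ∈ supp F_X}` and
`in_ν(F_X) = Y^ω P(X/Y^δ)` with `P(0) = 0`, then for `G = F - F(0,Y)` and
`Q = ∫₀^Z P` one has `in_ν(G) = Y^{ω+δ} Q(X/Y^δ)` (and `ω + δ` is the ν-value of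
`G`). -/
theorem nuInitial_of_G_from_FX (δ ω : ℚ) (hδ : 0 < δ)
    (F : Polynomial (HahnSeries ℚ ℂ))
    (hFXne : derivative F ≠ 0)
    (hFX0 : (derivative F).coeff 0 = 0)
    (hω : IsNuVal δ ω (derivative F))
    (P : Polynomial ℂ) (hPne : P ≠ 0) (hP0 : P.coeff 0 = 0)
    (hinit : nuInitial δ ω (derivative F) =
      ∑ m ∈ Finset.range (P.natDegree + 1),
        C (HahnSeries.single (ω - δ * (m : ℚ)) (P.coeff m)) * X ^ m)
    (G : Polynomial (HahnSeries ℚ ℂ)) (hG : G = F - C (F.coeff 0))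
    (Q : Polynomial ℂ) (hQ : Q = antideriv P) :
    IsNuVal δ (ω + δ) G ∧
    nuInitial δ (ω + δ) G =
      ∑ m ∈ Finset.range (Q.natDegree + 1),
        C (HahnSeries.single (ω + δ - δ * (m : ℚ)) (Q.coeff m)) * X ^ m := by
  exact main_aux δ ω hδ F hFXne hFX0 hω P hPne hP0 hinit G hG Q hQ
end
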